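/- The polynomial G_s(X,Y,Z) = (s⁹+1)X⁴ − 3s⁷X³Y + 6s⁶X³Z − 3s⁵X²Y² − 6s⁴X²YZ + 6s³X²Z² + 4s³XY³ − 6s²XY²Z − 6sXYZ² + 3sY⁴ + XZ³ + 3Y³Z satisfies the symmetry ζ₉⁴·G_s(X,Y,Z) = G_{ζ₉²s}(ζ₉X, ζ₉⁵Y, ζ₉⁷Z), where ζ₉ = exp(2πi/9). -/
import Mathlib


noncomputable def KSG (s X Y Z : ℂ) : ℂ :=
  (s^9 + 1)*X^4 - 3*s^7*X^3*Y + 6*s^6*X^3*Z - 3*s^5*X^2*Y^2 - 6*s^4*X^2*Y*Z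
    + 6*s^3*X^2*Z^2 + 4*s^3*X*Y^3 - 6*s^2*X*Y^2*Z - 6*s*X*Y*Z^2 + 3*s*Y^4
    + X*Z^3 + 3*Y^3*Z

/-- Equivariance of the universal family over the 9-fold cover under the Galois
automorphism `s ↦ ζ₉²s` combined with `diag(ζ₉, ζ₉⁵, ζ₉⁷)`:
`ζ₉⁴·G_s(X,Y,Z) = G_{ζ₉²s}(ζ₉X, ζ₉⁵Y, ζ₉⁷Z)` where `ζ₉ = exp(2πi/9)`. -/
theorem stmt_17 :
    ∀ s X Y Z : ℂ,
      (Complex.exp (2*Real.pi*Complex.I/9))^4 * KSG s X Y Z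
        = KSG ((Complex.exp (2*Real.pi*Complex.I/9))^2 * s)
            ((Complex.exp (2*Real.pi*Complex.I/9)) * X)
            ((Complex.exp (2*Real.pi*Complex.I/9))^5 * Y)
            ((Complex.exp (2*Real.pi*Complex.I/9))^7 * Z) := by
  intro s X Y Z
  set e : ℂ := Complex.exp (2*Real.pi*Complex.I/9) with he
  have h9 : e^9 = 1 := by
    rw [he, ← Complex.exp_nat_mul]
    push_cast
    rw [show (9 : ℂ) * (2*Real.pi*Complex.I/9) = 2*Real.pi*Complex.I by ring]
    exact Complex.exp_two_pi_mul_I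
  unfold KSG
  linear_combination (-((-6)*e^4*s*X*Y*Z^2 + (-6)*e^4*s^2*X*Y^2*Z + (-6)*e^4*s^4*X^2*Y*Z
    + (-6)*e^13*s*X*Y*Z^2 + (-6)*e^13*s^2*X*Y^2*Z + (-6)*e^13*s^4*X^2*Y*Z
    + (-3)*e^4*s^5*X^2*Y^2 + (-3)*e^4*s^7*X^3*Y + (-3)*e^13*s^5*X^2*Y^2
    + (-3)*e^13*s^7*X^3*Y + e^4*X*Z^3 + e^4*s^9*X^4 + e^13*X*Z^3 + e^13*s^9*X^4
    + 3*e^4*Y^3*Z + 3*e^4*s*Y^4 + 3*e^13*Y^3*Z + 3*e^13*s*Y^4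
    + 4*e^4*s^3*X*Y^3 + 4*e^13*s^3*X*Y^3 + 6*e^4*s^3*X^2*Z^2
    + 6*e^4*s^6*X^3*Z + 6*e^13*s^3*X^2*Z^2 + 6*e^13*s^6*X^3*Z) ) * h9
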